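/- arXiv:2104.01170 — 12 statements merged into one kernel-verified Lean document; each statement's English description precedes it below -/
import Mathlib

section
/- Let x, y ∈ ℂ^r. Then the infimum of ‖Δ₁‖_F² + ‖Δ₂‖_F² over pairs Δ₁, Δ₂ ∈ ℂ^{r×r} with Δ₁ skew-Hermitian, Δ₂ negative semidefinite Hermitian, and (Δ₁ − Δ₂)x = y, equals the infimum of ‖Δ‖_F² over all Δ ∈ ℂ^{r×r} with Δ + Δ* positive semidefinite and Δx = y. -/
/-!
Every complex matrix splits as `Δ = S + H` with `S` skew-Hermitian and `H` Hermitian; the two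
parts are orthogonal for the Frobenius inner product, since `tr (Sᴴ H + Hᴴ S) = tr (H S - S H) = 0`,
and `Δ + Δᴴ = 2 H`. Hence `(Δ₁, Δ₂) ↦ Δ₁ - Δ₂` maps the first feasible set onto the second with
inverse `Δ ↦ (S, -H)`, preserving the cost, so the two sets of values are equal.
-/

open Matrix
open scoped ComplexOrder

/-- Squared Frobenius norm of a complex matrix. -/
noncomputable def frobSq {r q : ℕ} (A : Matrix (Fin r) (Fin q) ℂ) : ℝ :=
  ∑ i, ∑ j, ‖A i j‖ ^ 2

theorem frobSq_neg {r q : ℕ} (A : Matrix (Fin r) (Fin q) ℂ) : frobSq (-A) = frobSq A := by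
  simp [frobSq]

theorem ofReal_frobSq {r q : ℕ} (A : Matrix (Fin r) (Fin q) ℂ) :
    (frobSq A : ℂ) = (Aᴴ * A).trace := by
  simp only [frobSq, trace, diag_apply, mul_apply, conjTranspose_apply, RCLike.star_def,
    Complex.conj_mul', Complex.ofReal_sum, Complex.ofReal_pow]
  exact Finset.sum_comm

theorem frobSq_add_of_skewHermitian_of_isHermitian {r : ℕ} {S H : Matrix (Fin r) (Fin r) ℂ}
    (hS : Sᴴ = -S) (hH : Hᴴ = H) : frobSq (S + H) = frobSq S + frobSq H := by
  have hexpand : (S + H)ᴴ * (S + H) = Sᴴ * S + Hᴴ * H + (Sᴴ * H + Hᴴ * S) := by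
    rw [conjTranspose_add, add_mul, mul_add, mul_add]
    abel
  have hcross : (Sᴴ * H + Hᴴ * S).trace = 0 := by
    rw [hS, hH, trace_add, neg_mul, trace_neg, trace_mul_comm, neg_add_cancel]
  apply Complex.ofReal_injective
  push_cast [ofReal_frobSq]
  rw [hexpand, trace_add, trace_add, hcross, add_zero]

theorem posSemidef_add_conjTranspose_iff {n 𝕜 : Type*} [RCLike 𝕜] {S H : Matrix n n 𝕜}
    (hS : Sᴴ = -S) (hH : Hᴴ = H) : (S + H + (S + H)ᴴ).PosSemidef ↔ H.PosSemidef := by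
  rw [conjTranspose_add, hS, hH, add_add_add_comm, add_neg_cancel, zero_add]
  refine ⟨fun h ↦ ?_, fun h ↦ h.add h⟩
  simpa [← two_smul ℝ H, smul_smul] using h.smul (a := (2⁻¹ : ℝ)) (by norm_num)

theorem inf_skewHerm_negSemidef_eq_inf_dissipative
    {r : ℕ} (x y : Fin r → ℂ) :
    sInf {t : ℝ | ∃ Δ₁ Δ₂ : Matrix (Fin r) (Fin r) ℂ,
        Δ₁ᴴ = -Δ₁ ∧ (-Δ₂).PosSemidef ∧ (Δ₁ - Δ₂) *ᵥ x = y ∧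
        t = frobSq Δ₁ + frobSq Δ₂}
      =
    sInf {t : ℝ | ∃ Δ : Matrix (Fin r) (Fin r) ℂ,
        (Δ + Δᴴ).PosSemidef ∧ Δ *ᵥ x = y ∧ t = frobSq Δ} := by
  congr 1
  ext t
  constructor
  · rintro ⟨Δ₁, Δ₂, hskew, hneg, hxy, rfl⟩
    have hherm : (-Δ₂)ᴴ = -Δ₂ := hneg.isHermitian
    rw [sub_eq_add_neg] at hxy
    exact ⟨Δ₁ + -Δ₂, (posSemidef_add_conjTranspose_iff hskew hherm).2 hneg, hxy,
      by rw [frobSq_add_of_skewHermitian_of_isHermitian hskew hherm, frobSq_neg]⟩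
  · rintro ⟨Δ, hpos, hxy, rfl⟩
    set S : Matrix (Fin r) (Fin r) ℂ := ↑(skewAdjointPart ℝ Δ)
    set H : Matrix (Fin r) (Fin r) ℂ := ↑(selfAdjointPart ℝ Δ)
    have hskew : Sᴴ = -S := (skewAdjointPart ℝ Δ).2
    have hherm : Hᴴ = H := (selfAdjointPart ℝ Δ).2
    have hsum : S + H = Δ :=
      (add_comm S H).trans (StarModule.selfAdjointPart_add_skewAdjointPart ℝ Δ)
    refine ⟨S, -H, hskew, ?_, by rwa [sub_neg_eq_add, hsum], ?_⟩
    · rwa [neg_neg, ← posSemidef_add_conjTranspose_iff hskew hherm, hsum]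
    · rw [frobSq_neg, ← frobSq_add_of_skewHermitian_of_isHermitian hskew hherm, hsum]
end

section
/- Let A, B ∈ ℂ^{n×p}. Then the matrix [A conj(A)] [B conj(B)]†, where [A conj(A)] denotes the n×2p matrix with blocks A and the entrywise complex conjugate of A, is a real matrix (all entries have zero imaginary part). -/
/-!
Let `S` be the unitary permutation matrix exchanging the two column blocks, so that
`conj [X conj(X)] = [X conj(X)] * S` for every `X`. Entrywise conjugation and right
multiplication by a unitary both preserve the Penrose conditions, so uniqueness of the
Moore–Penrose inverse gives `conj (C†) = Sᴴ * C†` for `C = [B conj(B)]`. Hence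
`conj (M * C†) = M * S * Sᴴ * C† = M * C†` for `M = [A conj(A)]`.
-/

open Matrix

/-- `Xd` is the Moore–Penrose pseudoinverse of `X` (the four Penrose conditions). -/
def IsMoorePenroseInv {m n : Type*} [Fintype m] [Fintype n]
    (X : Matrix m n ℂ) (Xd : Matrix n m ℂ) : Prop :=
  X * Xd * X = X ∧ Xd * X * Xd = Xd ∧ (X * Xd)ᴴ = X * Xd ∧ (Xd * X)ᴴ = Xd * X

namespace IsMoorePenroseInv

variable {m n : Type*} [Fintype m] [Fintype n] {X : Matrix m n ℂ} {Y Z : Matrix n m ℂ}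

theorem conjTranspose (h : IsMoorePenroseInv X Y) : IsMoorePenroseInv Xᴴ Yᴴ := by
  obtain ⟨h₁, h₂, h₃, h₄⟩ := h
  refine ⟨?_, ?_, ?_, ?_⟩
  · rw [← conjTranspose_mul, ← conjTranspose_mul, ← Matrix.mul_assoc, h₁]
  · rw [← conjTranspose_mul, ← conjTranspose_mul, ← Matrix.mul_assoc, h₂]
  · rw [← conjTranspose_mul, conjTranspose_conjTranspose, h₄]
  · rw [← conjTranspose_mul, conjTranspose_conjTranspose, h₃]

theorem mul_eq_mul (hY : IsMoorePenroseInv X Y) (hZ : IsMoorePenroseInv X Z) :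
    X * Y = X * Z :=
  calc X * Y = (X * Z * X * Y)ᴴ := by rw [hZ.1, hY.2.2.1]
    _ = (X * Y)ᴴ * (X * Z)ᴴ := by rw [Matrix.mul_assoc (X * Z), conjTranspose_mul]
    _ = X * Z := by rw [hY.2.2.1, hZ.2.2.1, ← Matrix.mul_assoc, hY.1]

theorem unique (hY : IsMoorePenroseInv X Y) (hZ : IsMoorePenroseInv X Z) : Y = Z := by
  have hXY : X * Y = X * Z := hY.mul_eq_mul hZ
  have hYX : Y * X = Z * X := by
    rw [← hY.2.2.2, ← hZ.2.2.2, conjTranspose_mul, conjTranspose_mul,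
      hY.conjTranspose.mul_eq_mul hZ.conjTranspose]
  calc Y = Y * X * Y := hY.2.1.symm
    _ = Z * X * Z := by rw [hYX, Matrix.mul_assoc, hXY, ← Matrix.mul_assoc]
    _ = Z := hZ.2.1

theorem map_conj (h : IsMoorePenroseInv X Y) :
    IsMoorePenroseInv (X.map (starRingEnd ℂ)) (Y.map (starRingEnd ℂ)) := by
  obtain ⟨h₁, h₂, h₃, h₄⟩ := h
  refine ⟨?_, ?_, ?_, ?_⟩ <;>
    simp only [← Matrix.map_mul, ← conjTranspose_map (starRingEnd ℂ) fun _ => rfl,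
      h₁, h₂, h₃, h₄]

theorem mul_unitary [DecidableEq n] {S : Matrix n n ℂ} (h : IsMoorePenroseInv X Y)
    (hS : S ∈ unitary (Matrix n n ℂ)) : IsMoorePenroseInv (X * S) (star S * Y) := by
  obtain ⟨h₁, h₂, h₃, h₄⟩ := h
  have hcancel : X * S * (star S * Y) = X * Y := by
    rw [Matrix.mul_assoc, ← Matrix.mul_assoc S, Unitary.mul_star_self_of_mem hS, Matrix.one_mul]
  refine ⟨?_, ?_, by rw [hcancel, h₃], ?_⟩
  · rw [hcancel, ← Matrix.mul_assoc, h₁]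
  · rw [Matrix.mul_assoc, hcancel, Matrix.mul_assoc, ← Matrix.mul_assoc Y, h₂]
  · rw [star_eq_conjTranspose, Matrix.mul_assoc, ← Matrix.mul_assoc Y, conjTranspose_mul,
      conjTranspose_mul, h₄, conjTranspose_conjTranspose, Matrix.mul_assoc]

theorem map_conj_eq_star_mul [DecidableEq n] {S : Matrix n n ℂ} (h : IsMoorePenroseInv X Y)
    (hS : S ∈ unitary (Matrix n n ℂ)) (hX : X.map (starRingEnd ℂ) = X * S) :
    Y.map (starRingEnd ℂ) = star S * Y :=
  (hX ▸ h.map_conj).unique (h.mul_unitary hS)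

end IsMoorePenroseInv

def swapBlocks (R n : Type*) [Zero R] [One R] [DecidableEq n] : Matrix (n ⊕ n) (n ⊕ n) R :=
  fromBlocks 0 1 1 0

section SwapBlocks

variable {R l n : Type*} [Fintype n] [DecidableEq n]

theorem fromCols_mul_swapBlocks [Semiring R] (X Y : Matrix l n R) :
    fromCols X Y * swapBlocks R n = fromCols Y X := by
  simp [swapBlocks, fromCols_mul_fromBlocks]

theorem swapBlocks_mem_unitary [Semiring R] [StarRing R] :
    swapBlocks R n ∈ unitary (Matrix (n ⊕ n) (n ⊕ n) R) := by
  rw [Unitary.mem_iff, star_eq_conjTranspose, swapBlocks, fromBlocks_conjTranspose]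
  simp [fromBlocks_multiply, ← fromBlocks_one]

theorem map_conj_fromCols_self_map_conj (X : Matrix l n ℂ) :
    (fromCols X (X.map (starRingEnd ℂ))).map (starRingEnd ℂ) =
      fromCols X (X.map (starRingEnd ℂ)) * swapBlocks ℂ n := by
  rw [fromCols_mul_swapBlocks]
  ext i (j | j) <;> simp

end SwapBlocks

theorem fromColumns_conj_mul_pinv_isReal
    {n p : ℕ} (A B : Matrix (Fin n) (Fin p) ℂ)
    (Bd : Matrix (Fin p ⊕ Fin p) (Fin n) ℂ)
    (hBd : IsMoorePenroseInv (fromCols B (B.map (starRingEnd ℂ))) Bd) :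
    ∀ i j, ((fromCols A (A.map (starRingEnd ℂ)) * Bd) i j).im = 0 := by
  set M := fromCols A (A.map (starRingEnd ℂ))
  have hS : swapBlocks ℂ (Fin p) ∈ unitary _ := swapBlocks_mem_unitary
  have hBd_conj : Bd.map (starRingEnd ℂ) = star (swapBlocks ℂ (Fin p)) * Bd :=
    hBd.map_conj_eq_star_mul hS (map_conj_fromCols_self_map_conj B)
  have hreal : (M * Bd).map (starRingEnd ℂ) = M * Bd := by
    rw [Matrix.map_mul, map_conj_fromCols_self_map_conj, hBd_conj, Matrix.mul_assoc,
      ← Matrix.mul_assoc (swapBlocks ℂ _), Unitary.mul_star_self_of_mem hS, Matrix.one_mul]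
  intro i j
  exact Complex.conj_eq_iff_im.mp (congrFun (congrFun hreal i) j)
end

section
/- Let X, Y ∈ ℂ^{n×k} and set 𝒳 = [X conj(X)], 𝒴 = [Y conj(Y)] ∈ ℂ^{n×2k}. If the matrix M = (𝒳*𝒴 + 𝒴*𝒳)⁻¹ exists, then 𝒳 M 𝒴* is a real matrix. -/
/-!
Entrywise complex conjugation acts on `𝒳 = [X, conj X]` and `𝒴 = [Y, conj Y]` by swapping the two
column blocks, i.e. by a permutation `σ` of the columns. It therefore acts on `𝒳ᴴ𝒴 + 𝒴ᴴ𝒳` by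
permuting rows and columns by `σ`, hence in the same way on its inverse `M`, and in `𝒳 M 𝒴ᴴ` the
permutations cancel: the matrix is fixed by conjugation, i.e. real.
-/

open Matrix

namespace Matrix

variable {R : Type*} {m ι : Type*}

theorem map_starRingEnd_fromCols_self_map [CommSemiring R] [StarRing R] (X : Matrix m ι R) :
    (fromCols X (X.map (starRingEnd R))).map (starRingEnd R) =
      (fromCols X (X.map (starRingEnd R))).submatrix id (Equiv.sumComm ι ι) := by
  ext i (j | j) <;> simp

section ColumnPermutation

variable [CommSemiring R] [StarRing R] {e : ι ≃ ι} {X Y : Matrix m ι R}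

theorem map_starRingEnd_conjTranspose_mul [Fintype m]
    (hX : X.map (starRingEnd R) = X.submatrix id e) (hY : Y.map (starRingEnd R) = Y.submatrix id e) :
    (Xᴴ * Y).map (starRingEnd R) = (Xᴴ * Y).submatrix e e := by
  rw [Matrix.map_mul, conjTranspose_map (starRingEnd R) (fun _ => rfl), hX, hY,
    conjTranspose_submatrix, submatrix_mul _ _ _ _ _ Function.bijective_id]

theorem map_starRingEnd_mul_mul_conjTranspose [Fintype ι] {M : Matrix ι ι R}
    (hX : X.map (starRingEnd R) = X.submatrix id e) (hY : Y.map (starRingEnd R) = Y.submatrix id e)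
    (hM : M.map (starRingEnd R) = M.submatrix e e) :
    (X * M * Yᴴ).map (starRingEnd R) = X * M * Yᴴ := by
  rw [Matrix.map_mul, Matrix.map_mul, hX, hM, conjTranspose_map (starRingEnd R) (fun _ => rfl),
    hY, conjTranspose_submatrix, submatrix_mul_equiv, submatrix_mul_equiv, submatrix_id_id]

end ColumnPermutation

theorem map_eq_submatrix_of_mul_eq_one [CommRing R] [Fintype ι] [DecidableEq ι] {f : R →+* R}
    {e : ι ≃ ι} {A M : Matrix ι ι R} (hMA : M * A = 1) (hA : A.map f = A.submatrix e e) :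
    M.map f = M.submatrix e e := by
  have hfMA : M.map f * A.submatrix e e = 1 := by
    rw [← hA, ← RingHom.mapMatrix_apply, ← RingHom.mapMatrix_apply, ← map_mul, hMA, map_one]
  rw [← inv_eq_left_inv hfMA, inv_submatrix_equiv, inv_eq_left_inv hMA]

end Matrix

theorem calX_inv_calY_conjTranspose_isReal_general
    {n k : ℕ} (X Y : Matrix (Fin n) (Fin k) ℂ)
    (M : Matrix (Fin k ⊕ Fin k) (Fin k ⊕ Fin k) ℂ)
    (hM : M * ((fromCols X (X.map (starRingEnd ℂ)))ᴴ * fromCols Y (Y.map (starRingEnd ℂ))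
            + (fromCols Y (Y.map (starRingEnd ℂ)))ᴴ * fromCols X (X.map (starRingEnd ℂ))) = 1) :
    ∀ i j, ((fromCols X (X.map (starRingEnd ℂ)) * M
        * (fromCols Y (Y.map (starRingEnd ℂ)))ᴴ) i j).im = 0 := by
  set 𝒳 := fromCols X (X.map (starRingEnd ℂ))
  set 𝒴 := fromCols Y (Y.map (starRingEnd ℂ))
  have h𝒳 : 𝒳.map (starRingEnd ℂ) = 𝒳.submatrix id (Equiv.sumComm _ _) :=
    map_starRingEnd_fromCols_self_map X
  have h𝒴 : 𝒴.map (starRingEnd ℂ) = 𝒴.submatrix id (Equiv.sumComm _ _) :=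
    map_starRingEnd_fromCols_self_map Y
  have hA : (𝒳ᴴ * 𝒴 + 𝒴ᴴ * 𝒳).map (starRingEnd ℂ) =
      (𝒳ᴴ * 𝒴 + 𝒴ᴴ * 𝒳).submatrix (Equiv.sumComm _ _) (Equiv.sumComm _ _) := by
    rw [Matrix.map_add _ (map_add _), map_starRingEnd_conjTranspose_mul h𝒳 h𝒴,
      map_starRingEnd_conjTranspose_mul h𝒴 h𝒳]
    rfl
  have hM_map := map_eq_submatrix_of_mul_eq_one hM hA
  intro i j
  exact Complex.conj_eq_iff_im.mp <|
    congr_fun₂ (map_starRingEnd_mul_mul_conjTranspose h𝒳 h𝒴 hM_map) i j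

theorem calX_inv_calY_conjTranspose_isReal
    {n k : ℕ} (X Y : Matrix (Fin n) (Fin k) ℂ)
    (M : Matrix (Fin k ⊕ Fin k) (Fin k ⊕ Fin k) ℂ)
    (hM : M * ((fromCols X (X.map (starRingEnd ℂ)))ᴴ * fromCols Y (Y.map (starRingEnd ℂ))
            + (fromCols Y (Y.map (starRingEnd ℂ)))ᴴ * fromCols X (X.map (starRingEnd ℂ))) = 1)
    (hM' : ((fromCols X (X.map (starRingEnd ℂ)))ᴴ * fromCols Y (Y.map (starRingEnd ℂ))
            + (fromCols Y (Y.map (starRingEnd ℂ)))ᴴ * fromCols X (X.map (starRingEnd ℂ))) * M = 1) :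
    ∀ i j, ((fromCols X (X.map (starRingEnd ℂ)) * M
        * (fromCols Y (Y.map (starRingEnd ℂ)))ᴴ) i j).im = 0 :=
  calX_inv_calY_conjTranspose_isReal_general X Y M hM
end

section
/- Let X, Y ∈ ℂ^{n×m} with reduced singular value decomposition X = U₁Σ₁V₁*, where Σ₁ ∈ ℂ^{p×p} is invertible diagonal with p = rank(X), and U₁ ∈ ℂ^{n×p}, V₁ ∈ ℂ^{m×p} have orthonormal columns. If X*Y + Y*X is positive semidefinite, then U₁*(YX† + (YX†)*)U₁ is positive semidefinite, where X† = V₁Σ₁⁻¹U₁* is the Moore–Penrose pseudoinverse of X. -/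
open Matrix
open scoped ComplexOrder

theorem psd_compression_of_psd
    {n m p : ℕ} (X Y : Matrix (Fin n) (Fin m) ℂ)
    (U₁ : Matrix (Fin n) (Fin p) ℂ) (V₁ : Matrix (Fin m) (Fin p) ℂ)
    (Sig : Matrix (Fin p) (Fin p) ℂ)
    (hrank : X.rank = p)
    (hU : U₁ᴴ * U₁ = 1) (hV : V₁ᴴ * V₁ = 1)
    (hSigdiag : Sig.IsDiag) (hSigpos : Sig.PosDef) (hSigunit : IsUnit Sig)
    (hX : X = U₁ * Sig * V₁ᴴ)
    (hPSD : (Xᴴ * Y + Yᴴ * X).PosSemidef) :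
    (U₁ᴴ * (Y * (V₁ * Sig⁻¹ * U₁ᴴ) + (Y * (V₁ * Sig⁻¹ * U₁ᴴ))ᴴ) * U₁).PosSemidef := by
  have hdet : IsUnit Sig.det := (Matrix.isUnit_iff_isUnit_det Sig).mp hSigunit
  have hSigH : Sigᴴ = Sig := hSigpos.isHermitian.eq
  have hSiginvH : Sig⁻¹ᴴ = Sig⁻¹ := by
    rw [Matrix.conjTranspose_nonsing_inv, hSigH]
  have hSS : Sig * Sig⁻¹ = 1 := Matrix.mul_nonsing_inv Sig hdet
  have hSS' : Sig⁻¹ * Sig = 1 := Matrix.nonsing_inv_mul Sig hdet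
  have hV1 : ∀ {k : ℕ} (A : Matrix (Fin p) (Fin k) ℂ), V₁ᴴ * (V₁ * A) = A := by
    intro k A; rw [← Matrix.mul_assoc, hV, Matrix.one_mul]
  have hU1 : ∀ {k : ℕ} (A : Matrix (Fin p) (Fin k) ℂ), U₁ᴴ * (U₁ * A) = A := by
    intro k A; rw [← Matrix.mul_assoc, hU, Matrix.one_mul]
  have hS1 : ∀ {k : ℕ} (A : Matrix (Fin p) (Fin k) ℂ), Sig⁻¹ * (Sig * A) = A := by
    intro k A; rw [← Matrix.mul_assoc, hSS', Matrix.one_mul]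
  have hS2 : ∀ {k : ℕ} (A : Matrix (Fin p) (Fin k) ℂ), Sig * (Sig⁻¹ * A) = A := by
    intro k A; rw [← Matrix.mul_assoc, hSS, Matrix.one_mul]
  have key := hPSD.conjTranspose_mul_mul_same (V₁ * Sig⁻¹)
  have heq : (V₁ * Sig⁻¹)ᴴ * (Xᴴ * Y + Yᴴ * X) * (V₁ * Sig⁻¹)
      = U₁ᴴ * (Y * (V₁ * Sig⁻¹ * U₁ᴴ) + (Y * (V₁ * Sig⁻¹ * U₁ᴴ))ᴴ) * U₁ := by
    subst hX
    simp only [Matrix.conjTranspose_mul, Matrix.conjTranspose_conjTranspose, hSigH, hSiginvH,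
      Matrix.mul_add, Matrix.add_mul, Matrix.mul_assoc, hV1, hU1, hS1, hS2, hV, hU, hSS, hSS',
      Matrix.mul_one]
  rw [← heq]; exact key
end

section
/- Let X, Y ∈ ℂ^{n×m}. There exists Δ ∈ ℂ^{n×n} with Δ + Δ* positive semidefinite and ΔX = Y if and only if YX†X = Y and X*Y + Y*X is positive semidefinite. -/
open Matrix
open scoped ComplexOrder

theorem dissipative_mapping_exists_iff
    {n m : ℕ} (X Y : Matrix (Fin n) (Fin m) ℂ)
    (Xd : Matrix (Fin m) (Fin n) ℂ) (hXd : IsMoorePenroseInv X Xd) :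
    (∃ Δ : Matrix (Fin n) (Fin n) ℂ, (Δ + Δᴴ).PosSemidef ∧ Δ * X = Y) ↔
      (Y * Xd * X = Y ∧ (Xᴴ * Y + Yᴴ * X).PosSemidef) := by
  obtain ⟨h1, h2, h3, h4⟩ := hXd
  constructor
  · rintro ⟨Δ, hpsd, rfl⟩
    refine ⟨?_, ?_⟩
    · calc Δ * X * Xd * X = Δ * (X * Xd * X) := by
            simp only [Matrix.mul_assoc]
        _ = Δ * X := by rw [h1]
    · have key : Xᴴ * (Δ * X) + (Δ * X)ᴴ * X = Xᴴ * (Δ + Δᴴ) * X := by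
        simp only [conjTranspose_mul, Matrix.mul_add, Matrix.add_mul,
          Matrix.mul_assoc]
      rw [key]
      exact hpsd.conjTranspose_mul_mul_same X
  · rintro ⟨hY, hS⟩
    have hXXd : Xdᴴ * Xᴴ = X * Xd := by
      rw [← conjTranspose_mul, h3]
    refine ⟨Y * Xd - Xdᴴ * Yᴴ * (1 - X * Xd), ?_, ?_⟩
    · have key : Y * Xd - Xdᴴ * Yᴴ * (1 - X * Xd) +
          (Y * Xd - Xdᴴ * Yᴴ * (1 - X * Xd))ᴴ = Xdᴴ * (Xᴴ * Y + Yᴴ * X) * Xd := by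
        have key2 : Xdᴴ * (Xᴴ * Y + Yᴴ * X) * Xd
            = X * Xd * (Y * Xd) + Xdᴴ * Yᴴ * (X * Xd) := by
          rw [Matrix.mul_add, Matrix.add_mul, ← Matrix.mul_assoc Xdᴴ Xᴴ Y, hXXd]
          simp only [Matrix.mul_assoc]
        rw [key2]
        simp only [conjTranspose_sub, conjTranspose_mul, conjTranspose_one,
          conjTranspose_conjTranspose, h3, Matrix.mul_sub, Matrix.sub_mul,
          Matrix.mul_one, Matrix.one_mul]
        abel
      rw [key]
      exact hS.conjTranspose_mul_mul_same Xd
    · rw [Matrix.mul_sub, Matrix.mul_one, Matrix.sub_mul, Matrix.sub_mul, hY,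
        Matrix.mul_assoc (Xdᴴ * Yᴴ) (X * Xd) X, Matrix.mul_assoc X Xd X,
        ← Matrix.mul_assoc X Xd X, h1]
      simp
end

section
/- Let X, Y ∈ ℂ^{n×m} satisfy YX†X = Y and X*Y + Y*X positive semidefinite. Then the matrix ℋ = YX† − (YX†)*(I_n − XX†) satisfies ℋX = Y and ℋ + ℋ* positive semidefinite; moreover ‖ℋ‖_F² = 2‖YX†‖_F² − trace((YX†)* XX† (YX†)). -/
open Matrix
open scoped ComplexOrder

/-!
Write `Z = YX†` and `P = XX†`, an orthogonal projector with `ZP = Z`, and `Q = I - P`.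
Since `QX = 0`, the correction term `Z*Q` does not change `ℋX = ZX = Y`. Its hermitian part
`Z*P + PZ` is the congruence `X†* (X*Y + Y*X) X†` of a positive semidefinite matrix. For the norm,
`ℋ*ℋ = Z*Z - Z*Z*Q - QZZ + QZZ*Q`; the two middle terms are traceless because `ZQ = 0`, and
`tr(QZZ*Q) = tr(Z*QZ) = ‖Z‖² - tr(Z*PZ)`.
-/

lemma frobSq_eq_re_trace {r q : ℕ} (A : Matrix (Fin r) (Fin q) ℂ) :
    frobSq A = (Aᴴ * A).trace.re := by
  rw [frobSq, trace, Complex.re_sum, Finset.sum_comm]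
  refine Finset.sum_congr rfl fun j _ => ?_
  simp only [diag_apply, mul_apply, conjTranspose_apply, Complex.re_sum]
  refine Finset.sum_congr rfl fun i _ => ?_
  rw [Complex.star_def, ← Complex.normSq_eq_conj_mul_self, Complex.ofReal_re, Complex.sq_norm]

namespace IsMoorePenroseInv

variable {m n : Type*} [Fintype m] [Fintype n] {X : Matrix m n ℂ} {Xd : Matrix n m ℂ}

lemma isHermitian (hXd : IsMoorePenroseInv X Xd) : (X * Xd).IsHermitian :=
  hXd.2.2.1

lemma isIdempotentElem (hXd : IsMoorePenroseInv X Xd) : IsIdempotentElem (X * Xd) := by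
  rw [IsIdempotentElem, ← Matrix.mul_assoc, hXd.1]

lemma conjTranspose_mul_add_mul (hXd : IsMoorePenroseInv X Xd) (Y : Matrix m n ℂ) :
    (Y * Xd)ᴴ * (X * Xd) + (X * Xd) * (Y * Xd) = Xdᴴ * (Xᴴ * Y + Yᴴ * X) * Xd := by
  nth_rw 2 [← hXd.isHermitian.eq]
  simp only [conjTranspose_mul, Matrix.mul_add, Matrix.add_mul, Matrix.mul_assoc]
  abel

end IsMoorePenroseInv

section MinimalDissipativeMap

variable {ι R : Type*} [Fintype ι] [DecidableEq ι]

def minimalDissipativeMap [Ring R] [StarRing R] (Z P : Matrix ι ι R) : Matrix ι ι R :=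
  Z - Zᴴ * (1 - P)

lemma minimalDissipativeMap_mul [Ring R] [StarRing R] {κ : Type*} {Z P : Matrix ι ι R}
    {X : Matrix ι κ R} (hPX : P * X = X) : minimalDissipativeMap Z P * X = Z * X := by
  rw [minimalDissipativeMap, Matrix.sub_mul, Matrix.mul_assoc, Matrix.sub_mul, Matrix.one_mul,
    hPX, sub_self, Matrix.mul_zero, sub_zero]

lemma minimalDissipativeMap_add_conjTranspose [Ring R] [StarRing R] {Z P : Matrix ι ι R}
    (hP : P.IsHermitian) :
    minimalDissipativeMap Z P + (minimalDissipativeMap Z P)ᴴ = Zᴴ * P + P * Z := by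
  simp only [minimalDissipativeMap, conjTranspose_sub, conjTranspose_mul, conjTranspose_one,
    conjTranspose_conjTranspose, hP.eq]
  noncomm_ring

lemma trace_conjTranspose_mul_minimalDissipativeMap [CommRing R] [StarRing R]
    {Z P : Matrix ι ι R} (hP : P.IsHermitian) (hPP : IsIdempotentElem P) (hZP : Z * P = Z) :
    ((minimalDissipativeMap Z P)ᴴ * minimalDissipativeMap Z P).trace =
      2 * (Zᴴ * Z).trace - (Zᴴ * P * Z).trace := by
  set Q : Matrix ι ι R := 1 - P
  have hZQ : Z * Q = 0 := by rw [Matrix.mul_sub, Matrix.mul_one, hZP, sub_self]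
  have hQZ : Q * Zᴴ = 0 := by
    rw [← conjTranspose_conjTranspose Q, ← conjTranspose_mul, conjTranspose_sub,
      conjTranspose_one, hP.eq, hZQ, conjTranspose_zero]
  have hQQ : Q * Q = Q := hPP.one_sub
  have expand : (minimalDissipativeMap Z P)ᴴ * minimalDissipativeMap Z P =
      Zᴴ * Z - Zᴴ * (Zᴴ * Q) - Q * Z * Z + Q * Z * (Zᴴ * Q) := by
    simp only [minimalDissipativeMap, conjTranspose_sub, conjTranspose_mul, conjTranspose_one,
      conjTranspose_conjTranspose, hP.eq, Q]
    noncomm_ring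
  have hZZQ : (Zᴴ * (Zᴴ * Q)).trace = 0 := by
    rw [trace_mul_comm, Matrix.mul_assoc, hQZ, Matrix.mul_zero, trace_zero]
  have hQZZ : (Q * Z * Z).trace = 0 := by
    rw [trace_mul_comm, ← Matrix.mul_assoc, hZQ, Matrix.zero_mul, trace_zero]
  have hQZZQ : (Q * Z * (Zᴴ * Q)).trace = (Zᴴ * Z).trace - (Zᴴ * P * Z).trace := by
    rw [trace_mul_comm, Matrix.mul_assoc, ← Matrix.mul_assoc Q, hQQ, ← trace_sub]
    simp only [Q, Matrix.mul_sub, Matrix.sub_mul, Matrix.one_mul, Matrix.mul_assoc]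
  rw [expand, trace_add, trace_sub, trace_sub, hZZQ, hQZZ, hQZZQ]
  ring

end MinimalDissipativeMap

theorem minimal_dissipative_mapping_properties
    {n m : ℕ} (X Y : Matrix (Fin n) (Fin m) ℂ)
    (Xd : Matrix (Fin m) (Fin n) ℂ) (hXd : IsMoorePenroseInv X Xd)
    (h1 : Y * Xd * X = Y) (h2 : (Xᴴ * Y + Yᴴ * X).PosSemidef)
    (H : Matrix (Fin n) (Fin n) ℂ)
    (hH : H = Y * Xd - (Y * Xd)ᴴ * (1 - X * Xd)) :
    H * X = Y ∧ (H + Hᴴ).PosSemidef ∧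
      frobSq H = 2 * frobSq (Y * Xd)
        - (((Y * Xd)ᴴ * (X * Xd) * (Y * Xd)).trace).re := by
  obtain rfl : H = minimalDissipativeMap (Y * Xd) (X * Xd) := hH
  have hZP : Y * Xd * (X * Xd) = Y * Xd := by rw [← Matrix.mul_assoc, h1]
  refine ⟨?_, ?_, ?_⟩
  · rw [minimalDissipativeMap_mul hXd.1, h1]
  · rw [minimalDissipativeMap_add_conjTranspose hXd.isHermitian, hXd.conjTranspose_mul_add_mul]
    exact h2.conjTranspose_mul_mul_same Xd
  · rw [frobSq_eq_re_trace, frobSq_eq_re_trace,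
      trace_conjTranspose_mul_minimalDissipativeMap hXd.isHermitian hXd.isIdempotentElem hZP]
    simp
end

section
/- Let x, y ∈ ℂ^n be nonzero vectors. There exists Δ ∈ ℂ^{n×n} with Δ + Δ* positive semidefinite and Δx = y if and only if Re(x*y) ≥ 0. -/
/-!
Necessity: `x* (Δ + Δ*) x = 2 Re (x* Δ x) = 2 Re (x* y)`. Sufficiency: with `s = x* x` and
`c = x* y`, the matrix `Δ = (y x* - x y*) / s + (c̄ / s²) x x*` maps `x` to `y`; its first summand
is skew-Hermitian, so `Δ + Δ* = (2 Re c / s²) x x*`, which is positive semidefinite.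
-/

open Matrix
open scoped ComplexOrder

namespace Matrix

variable {𝕜 n : Type*} [RCLike 𝕜] [Fintype n]

lemma star_dotProduct_conjTranspose_mulVec {R : Type*} [CommSemiring R] [StarRing R]
    (A : Matrix n n R) (x : n → R) :
    star x ⬝ᵥ (Aᴴ *ᵥ x) = star (star x ⬝ᵥ (A *ᵥ x)) := by
  rw [star_dotProduct, star_mulVec, conjTranspose_conjTranspose, dotProduct_mulVec]

lemma re_star_dotProduct_mulVec_nonneg {A : Matrix n n 𝕜} (hA : (A + Aᴴ).PosSemidef)
    (x : n → 𝕜) : 0 ≤ RCLike.re (star x ⬝ᵥ (A *ᵥ x)) := by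
  have h := hA.dotProduct_mulVec_nonneg x
  rw [add_mulVec, dotProduct_add, star_dotProduct_conjTranspose_mulVec, RCLike.star_def,
    RCLike.add_conj, RCLike.nonneg_iff] at h
  simpa using h.1

lemma exists_posSemidef_add_conjTranspose_mulVec_eq {x y : n → 𝕜} (hx : x ≠ 0)
    (hxy : 0 ≤ RCLike.re (star x ⬝ᵥ y)) :
    ∃ Δ : Matrix n n 𝕜, (Δ + Δᴴ).PosSemidef ∧ Δ *ᵥ x = y := by
  set s := star x ⬝ᵥ x
  set c := star x ⬝ᵥ y
  have hs : 0 < s := dotProduct_star_self_pos_iff.2 hx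
  have hs_star : star s = s := (IsSelfAdjoint.of_nonneg hs.le).star_eq
  let Δ := s⁻¹ • (vecMulVec y (star x) - vecMulVec x (star y)) +
    (star c / s ^ 2) • vecMulVec x (star x)
  refine ⟨Δ, ?_, ?_⟩
  · have hΔ : Δ + Δᴴ = ((c + star c) / s ^ 2) • vecMulVec x (star x) := by
      simp only [Δ, conjTranspose_add, conjTranspose_smul, conjTranspose_sub,
        conjTranspose_vecMulVec, star_star, star_inv₀, star_div₀, star_pow, hs_star]
      module
    rw [hΔ]
    refine (posSemidef_vecMulVec_self_star x).smul (div_nonneg ?_ (pow_pos hs 2).le)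
    rw [RCLike.star_def, RCLike.add_conj]
    positivity
  · simp only [Δ, add_mulVec, sub_mulVec, smul_mulVec, vecMulVec_mulVec, op_smul_eq_smul,
      star_dotProduct y x]
    match_scalars <;> field_simp <;> ring

theorem exists_posSemidef_add_conjTranspose_mulVec_eq_iff {x y : n → 𝕜} (hx : x ≠ 0) :
    (∃ Δ : Matrix n n 𝕜, (Δ + Δᴴ).PosSemidef ∧ Δ *ᵥ x = y) ↔
      0 ≤ RCLike.re (star x ⬝ᵥ y) := by
  refine ⟨?_, exists_posSemidef_add_conjTranspose_mulVec_eq hx⟩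
  rintro ⟨Δ, hΔ, rfl⟩
  exact re_star_dotProduct_mulVec_nonneg hΔ x

end Matrix

theorem dissipative_vector_mapping_exists_iff_general
    {n : ℕ} (x y : Fin n → ℂ) (hx : x ≠ 0) :
    (∃ Δ : Matrix (Fin n) (Fin n) ℂ, (Δ + Δᴴ).PosSemidef ∧ Δ *ᵥ x = y) ↔
      0 ≤ ((star x) ⬝ᵥ y).re :=
  exists_posSemidef_add_conjTranspose_mulVec_eq_iff hx

theorem dissipative_vector_mapping_exists_iff
    {n : ℕ} (x y : Fin n → ℂ) (hx : x ≠ 0) (hy : y ≠ 0) :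
    (∃ Δ : Matrix (Fin n) (Fin n) ℂ, (Δ + Δᴴ).PosSemidef ∧ Δ *ᵥ x = y) ↔
      0 ≤ ((star x) ⬝ᵥ y).re :=
  dissipative_vector_mapping_exists_iff_general x y hx
end

section
/- Let x, y ∈ ℂ^n be nonzero with Re(x*y) ≥ 0. Then the matrix ℋ = yx*/‖x‖² − xy*/‖x‖² + (y*x) xx*/‖x‖⁴ satisfies ℋx = y, ℋ + ℋ* positive semidefinite, and ‖ℋ‖_F² = 2‖y‖²/‖x‖² − |x*y|²/‖x‖⁴. -/
open Matrix
open scoped ComplexOrder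

/-- Squared Euclidean norm of a complex vector. -/
noncomputable def nsq {n : ℕ} (x : Fin n → ℂ) : ℝ := ∑ i, ‖x i‖ ^ 2

/-!
Write `c = ‖x‖²` and `s = x*y`. The skew-Hermitian part `(yx* - xy*)/c` of `ℋ` sends `x` to
`y - (s̄/c) x`, and the rank-one term `(s̄/c²) xx*` supplies the missing multiple of `x`.
The skew part cancels in `ℋ + ℋ*`, leaving `(2 Re s / c²) xx*`, which is positive semidefinite
exactly because `Re s ≥ 0`. The Frobenius norm is `tr(ℋ*ℋ)`, and expanding the products of
rank-one matrices reduces it to the scalars `c`, `‖y‖²` and `s`.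
-/

theorem ofReal_nsq {n : ℕ} (x : Fin n → ℂ) : (nsq x : ℂ) = star x ⬝ᵥ x := by
  simp [nsq, dotProduct, Complex.conj_mul']

theorem nsq_pos {n : ℕ} {x : Fin n → ℂ} (hx : x ≠ 0) : 0 < nsq x := by
  have h := dotProduct_star_self_pos_iff.mpr hx
  rwa [← ofReal_nsq, Complex.zero_lt_real] at h

noncomputable def dissipativeMapping {n : ℕ} (x y : Fin n → ℂ) : Matrix (Fin n) (Fin n) ℂ :=
  (nsq x : ℂ)⁻¹ • (vecMulVec y (star x) - vecMulVec x (star y))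
    + ((star y ⬝ᵥ x) / (nsq x : ℂ) ^ 2) • vecMulVec x (star x)

section dissipativeMapping

variable {n : ℕ} (x y : Fin n → ℂ)

theorem dissipativeMapping_mulVec (hx : x ≠ 0) : dissipativeMapping x y *ᵥ x = y := by
  have hc : (nsq x : ℂ) ≠ 0 := Complex.ofReal_ne_zero.mpr (nsq_pos hx).ne'
  simp only [dissipativeMapping, add_mulVec, smul_mulVec, sub_mulVec, vecMulVec_mulVec,
    op_smul_eq_smul, ← ofReal_nsq]
  ext i
  simp only [Pi.add_apply, Pi.smul_apply, Pi.sub_apply, smul_eq_mul]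
  field_simp
  ring

theorem dissipativeMapping_add_conjTranspose :
    dissipativeMapping x y + (dissipativeMapping x y)ᴴ =
      ((2 * (star x ⬝ᵥ y).re / nsq x ^ 2 : ℝ) : ℂ) • vecMulVec x (star x) := by
  ext i j
  simp only [dissipativeMapping, conjTranspose_add, conjTranspose_smul, conjTranspose_sub,
    conjTranspose_vecMulVec, star_star, star_dotProduct y x, Matrix.add_apply,
    Matrix.smul_apply, Matrix.sub_apply, vecMulVec_apply, Pi.star_apply, smul_eq_mul,
    star_inv₀, star_div₀, star_pow, Complex.star_def, Complex.conj_ofReal, Complex.conj_conj]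
  push_cast [Complex.re_eq_add_conj]
  ring

theorem posSemidef_dissipativeMapping_add_conjTranspose (hRe : 0 ≤ (star x ⬝ᵥ y).re) :
    (dissipativeMapping x y + (dissipativeMapping x y)ᴴ).PosSemidef := by
  rw [dissipativeMapping_add_conjTranspose]
  exact (posSemidef_vecMulVec_self_star x).smul (Complex.zero_le_real.mpr (by positivity))

theorem frobSq_dissipativeMapping (hx : x ≠ 0) :
    frobSq (dissipativeMapping x y) = 2 * nsq y / nsq x - ‖star x ⬝ᵥ y‖ ^ 2 / nsq x ^ 2 := by
  have hc : (nsq x : ℂ) ≠ 0 := Complex.ofReal_ne_zero.mpr (nsq_pos hx).ne'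
  apply Complex.ofReal_injective
  simp only [ofReal_frobSq, dissipativeMapping, conjTranspose_add, conjTranspose_smul,
    conjTranspose_sub, conjTranspose_vecMulVec, star_star, Matrix.add_mul, Matrix.mul_add,
    Matrix.sub_mul, Matrix.mul_sub, Matrix.smul_mul, Matrix.mul_smul, vecMulVec_mul_vecMulVec,
    vecMulVec_smul, trace_add, trace_sub, trace_smul, trace_vecMulVec, smul_eq_mul,
    dotProduct_comm _ (star _), star_dotProduct y x, ← ofReal_nsq, Complex.star_def,
    map_inv₀, map_div₀, map_pow, Complex.conj_ofReal, Complex.conj_conj]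
  push_cast
  rw [← Complex.conj_mul']
  field_simp
  ring

end dissipativeMapping

theorem minimal_dissipative_vector_mapping_general
    {n : ℕ} (x y : Fin n → ℂ) (hx : x ≠ 0)
    (hRe : 0 ≤ ((star x) ⬝ᵥ y).re)
    (H : Matrix (Fin n) (Fin n) ℂ)
    (hH : H = ((nsq x : ℂ))⁻¹ • (vecMulVec y (star x) - vecMulVec x (star y))
        + (((star y) ⬝ᵥ x) / (nsq x : ℂ) ^ 2) • vecMulVec x (star x)) :
    H *ᵥ x = y ∧ (H + Hᴴ).PosSemidef ∧
      frobSq H = 2 * nsq y / nsq x - ‖(star x) ⬝ᵥ y‖ ^ 2 / (nsq x) ^ 2 := by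
  subst hH
  exact ⟨dissipativeMapping_mulVec x y hx,
    posSemidef_dissipativeMapping_add_conjTranspose x y hRe, frobSq_dissipativeMapping x y hx⟩

theorem minimal_dissipative_vector_mapping
    {n : ℕ} (x y : Fin n → ℂ) (hx : x ≠ 0) (hy : y ≠ 0)
    (hRe : 0 ≤ ((star x) ⬝ᵥ y).re)
    (H : Matrix (Fin n) (Fin n) ℂ)
    (hH : H = ((nsq x : ℂ))⁻¹ • (vecMulVec y (star x) - vecMulVec x (star y))
        + (((star y) ⬝ᵥ x) / (nsq x : ℂ) ^ 2) • vecMulVec x (star x)) :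
    H *ᵥ x = y ∧ (H + Hᴴ).PosSemidef ∧
      frobSq H = 2 * nsq y / nsq x - ‖(star x) ⬝ᵥ y‖ ^ 2 / (nsq x) ^ 2 :=
  minimal_dissipative_vector_mapping_general x y hx hRe H hH
end

section
/- Let X, Y ∈ ℂ^{n×m} be nonzero such that X*Y + Y*X is invertible. If there exists Δ ∈ ℂ^{n×n} with ΔX = Y and Δ + Δ* positive semidefinite, then X*Y + Y*X is positive definite. -/
open Matrix
open scoped ComplexOrder

theorem Matrix.conjTranspose_mul_add_eq_of_mul_eq {R m n : Type*} [Fintype m]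
    [NonUnitalSemiring R] [StarRing R] {Δ : Matrix m m R} {X Y : Matrix m n R} (hΔ : Δ * X = Y) :
    Xᴴ * Y + Yᴴ * X = Xᴴ * (Δ + Δᴴ) * X := by
  subst hΔ
  simp only [conjTranspose_mul, Matrix.mul_add, Matrix.add_mul, Matrix.mul_assoc]

theorem posDef_of_dissipative_mapping_of_isUnit_general
    {n m : ℕ} (X Y : Matrix (Fin n) (Fin m) ℂ)
    (hUnit : IsUnit (Xᴴ * Y + Yᴴ * X))
    (h : ∃ Δ : Matrix (Fin n) (Fin n) ℂ, Δ * X = Y ∧ (Δ + Δᴴ).PosSemidef) :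
    (Xᴴ * Y + Yᴴ * X).PosDef := by
  obtain ⟨Δ, hΔ, hPSD⟩ := h
  have hPS : (Xᴴ * Y + Yᴴ * X).PosSemidef := by
    rw [conjTranspose_mul_add_eq_of_mul_eq hΔ]
    exact hPSD.conjTranspose_mul_mul_same X
  exact hPS.posDef_iff_isUnit.mpr hUnit

theorem posDef_of_dissipative_mapping_of_isUnit
    {n m : ℕ} (X Y : Matrix (Fin n) (Fin m) ℂ) (hX : X ≠ 0) (hY : Y ≠ 0)
    (hUnit : IsUnit (Xᴴ * Y + Yᴴ * X))
    (h : ∃ Δ : Matrix (Fin n) (Fin n) ℂ, Δ * X = Y ∧ (Δ + Δᴴ).PosSemidef) :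
    (Xᴴ * Y + Yᴴ * X).PosDef :=
  posDef_of_dissipative_mapping_of_isUnit_general X Y hUnit h
end

section
/- Let X, Y ∈ ℂ^{n×m} with X*Y + Y*X positive definite and YX†X = Y. Set M = (X*Y + Y*X)⁻¹ and H = (1/2)(YX† − (X†)*Y*) + (1/2)(YMY* + YMX*YX† + (YX†)*XMY* + (YX†)*XMX*YX†). Then HX = Y and H + H* = (YM₁ + (YX†)*XM₁)(YM₁ + (YX†)*XM₁)* ⪰ 0, where M = M₁M₁* is any factorization of M. -/
open Matrix
open scoped ComplexOrder

theorem second_characterization_H_properties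
    {n m : ℕ} (X Y : Matrix (Fin n) (Fin m) ℂ)
    (Xd : Matrix (Fin m) (Fin n) ℂ) (hXd : IsMoorePenroseInv X Xd)
    (hpos : (Xᴴ * Y + Yᴴ * X).PosDef) (h1 : Y * Xd * X = Y)
    (M M₁ : Matrix (Fin m) (Fin m) ℂ)
    (hM : M = (Xᴴ * Y + Yᴴ * X)⁻¹) (hM₁ : M = M₁ * M₁ᴴ)
    (H : Matrix (Fin n) (Fin n) ℂ)
    (hH : H = (1 / 2 : ℂ) • (Y * Xd - Xdᴴ * Yᴴ)
        + (1 / 2 : ℂ) • (Y * M * Yᴴ + Y * M * Xᴴ * Y * Xd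
            + (Y * Xd)ᴴ * X * M * Yᴴ + (Y * Xd)ᴴ * X * M * Xᴴ * Y * Xd)) :
    H * X = Y ∧
      H + Hᴴ = (Y * M₁ + (Y * Xd)ᴴ * X * M₁) * (Y * M₁ + (Y * Xd)ᴴ * X * M₁)ᴴ ∧
      (H + Hᴴ).PosSemidef := by
  set A := Xᴴ * Y + Yᴴ * X with hA
  have hAherm : Aᴴ = A := by
    simp [hA, conjTranspose_add, conjTranspose_mul, add_comm]
  have hMA : M * A = 1 := by
    rw [hM]; exact nonsing_inv_mul _ ((Matrix.isUnit_iff_isUnit_det _).mp hpos.isUnit)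
  have hMherm : Mᴴ = M := by rw [hM, conjTranspose_nonsing_inv, hAherm]
  set P := Xdᴴ * Yᴴ * X with hP
  have hPH : Pᴴ = Xᴴ * Y * Xd := by
    simp [hP, conjTranspose_mul, Matrix.mul_assoc]
  set S := Y * M * Yᴴ + Y * M * Xᴴ * Y * Xd
      + (Y * Xd)ᴴ * X * M * Yᴴ + (Y * Xd)ᴴ * X * M * Xᴴ * Y * Xd with hS
  have hYXdH : (Y * Xd)ᴴ * X = P := by
    simp [hP, conjTranspose_mul, Matrix.mul_assoc]
  have hSfac : S = (Y + P) * M * (Y + P)ᴴ := by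
    rw [hS, hYXdH, conjTranspose_add, hPH, Matrix.add_mul, Matrix.add_mul,
      Matrix.mul_add, Matrix.mul_add]
    simp only [Matrix.mul_assoc]
    abel
  have hYP_H_X : (Y + P)ᴴ * X = A := by
    rw [conjTranspose_add, hPH, Matrix.add_mul, Matrix.mul_assoc (Xᴴ * Y) Xd X,
      Matrix.mul_assoc Xᴴ Y (Xd * X), ← Matrix.mul_assoc Y Xd X, h1, add_comm]
  have hSX : S * X = Y + P := by
    rw [hSfac, Matrix.mul_assoc ((Y + P) * M) (Y + P)ᴴ X, hYP_H_X, Matrix.mul_assoc, hMA,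
      Matrix.mul_one]
  have hHX : H * X = Y := by
    rw [hH, Matrix.add_mul, Matrix.smul_mul, Matrix.smul_mul]
    have e1 : (Y * Xd - Xdᴴ * Yᴴ) * X = Y - P := by
      rw [Matrix.sub_mul, h1, hP]
    rw [e1, hSX, ← smul_add]
    have e2 : Y - P + (Y + P) = (2 : ℂ) • Y := by
      rw [two_smul]; abel
    rw [e2, smul_smul]
    norm_num
  have hSherm : Sᴴ = S := by
    rw [hSfac]
    simp [conjTranspose_mul, hMherm, Matrix.mul_assoc]
  have hstar : star (1 / 2 : ℂ) = 1 / 2 := by norm_num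
  have hHsum : H + Hᴴ = S := by
    rw [hH, conjTranspose_add, conjTranspose_smul, conjTranspose_smul, hSherm,
      conjTranspose_sub, conjTranspose_mul, conjTranspose_mul, conjTranspose_conjTranspose,
      conjTranspose_conjTranspose, hstar]
    rw [← smul_add, ← smul_add, ← smul_add]
    have : Y * Xd - Xdᴴ * Yᴴ + S + (Xdᴴ * Yᴴ - Y * Xd + S) = (2 : ℂ) • S := by
      rw [two_smul]; abel
    rw [this, smul_smul]
    norm_num
  have hfac : Y * M₁ + (Y * Xd)ᴴ * X * M₁ = (Y + P) * M₁ := by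
    rw [hYXdH, Matrix.add_mul]
  have hsum2 : H + Hᴴ = ((Y + P) * M₁) * ((Y + P) * M₁)ᴴ := by
    rw [hHsum, hSfac, hM₁, conjTranspose_mul]
    simp only [Matrix.mul_assoc]
  refine ⟨hHX, by rw [hsum2, hfac], ?_⟩
  rw [hsum2]
  exact posSemidef_self_mul_conjTranspose _
end

section
/- For M ∈ ℂ^{p×m}, define μ_{ℝ,q}(M)⁻¹ = inf{‖Δ‖_q : Δ ∈ ℝ^{m×p}, det(I_m − ΔM) = 0} for q ∈ {2, F} (spectral and Frobenius norms). If the spectral-norm infimum is attained by a matrix of rank at most two, then (1/√2) μ_{ℝ,2}(M) ≤ μ_{ℝ,F}(M) ≤ μ_{ℝ,2}(M). -/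
/-!
A real `Δ` of rank `r` has `‖Δ‖_F ^ 2 = tr (Δᵀ Δ)`, the sum of the at most `r` nonzero
eigenvalues of `Δᵀ Δ`, each of which is at most `‖Δ‖₂ ^ 2`; hence `‖Δ‖₂ ≤ ‖Δ‖_F ≤ √r ‖Δ‖₂`.
The first inequality compares the two infima over all `Δ` with `det (1 - Δ M) = 0`; the second,
applied to a rank-two minimizer of the spectral infimum, gives `μ_F⁻¹ ≤ √2 μ₂⁻¹`. Inverting the
infima yields the claim; when `μ₂⁻¹ = 0` both infima vanish, and with `0⁻¹ = 0` both
inequalities read `0 ≤ 0`.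
-/

open Matrix

/-- Spectral (operator 2-) norm of a real matrix. -/
noncomputable def specNorm {m p : ℕ} (A : Matrix (Fin m) (Fin p) ℝ) : ℝ :=
  ‖LinearMap.toContinuousLinearMap (Matrix.toEuclideanLin A)‖

/-- Frobenius norm of a real matrix. -/
noncomputable def frobNorm {m p : ℕ} (A : Matrix (Fin m) (Fin p) ℝ) : ℝ :=
  Real.sqrt (∑ i, ∑ j, (A i j) ^ 2)

section MatrixNorms

variable {m p : ℕ} (A : Matrix (Fin m) (Fin p) ℝ)

lemma specNorm_nonneg : 0 ≤ specNorm A :=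
  norm_nonneg _

lemma frobNorm_nonneg : 0 ≤ frobNorm A :=
  Real.sqrt_nonneg _

lemma frobNorm_sq : frobNorm A ^ 2 = (Aᴴ * A).trace := by
  rw [frobNorm, Real.sq_sqrt (by positivity), ← star_vec_dotProduct_vec]
  simp only [dotProduct, vec, Fintype.sum_prod_type, star_trivial, sq]
  exact Finset.sum_comm

section L2Operator

open scoped Matrix.Norms.L2Operator

lemma eigenvalues_conjTranspose_mul_self_le_specNorm_sq (i : Fin p) :
    (isHermitian_conjTranspose_mul_self A).eigenvalues i ≤ specNorm A ^ 2 := by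
  set hB := isHermitian_conjTranspose_mul_self A
  set v := hB.eigenvectorBasis i
  have hv : ‖v‖ = 1 := hB.eigenvectorBasis.orthonormal.1 i
  have hAv : ‖(WithLp.toLp 2 (A *ᵥ v) : EuclideanSpace ℝ (Fin m))‖ ≤ specNorm A :=
    (l2_opNorm_mulVec A v).trans_eq (by rw [hv, mul_one]; rfl)
  calc hB.eigenvalues i = ‖(WithLp.toLp 2 (A *ᵥ v) : EuclideanSpace ℝ (Fin m))‖ ^ 2 := by
        rw [hB.eigenvalues_eq, ← mulVec_mulVec,
          dotProduct_mulVec, vecMul_conjTranspose, star_star, dotProduct_comm,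
          ← EuclideanSpace.inner_toLp_toLp, real_inner_self_eq_norm_sq]
        rfl
    _ ≤ specNorm A ^ 2 := by gcongr

end L2Operator

lemma frobNorm_sq_le_rank_mul_specNorm_sq : frobNorm A ^ 2 ≤ A.rank * specNorm A ^ 2 := by
  classical
  set hB := isHermitian_conjTranspose_mul_self A
  calc frobNorm A ^ 2 = ∑ i, hB.eigenvalues i := by
        rw [frobNorm_sq, hB.trace_eq_sum_eigenvalues]; rfl
    _ = ∑ i with hB.eigenvalues i ≠ 0, hB.eigenvalues i := (Finset.sum_filter_ne_zero _).symm
    _ ≤ (Finset.univ.filter (hB.eigenvalues · ≠ 0)).card • specNorm A ^ 2 :=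
        Finset.sum_le_card_nsmul _ _ _ fun i _ ↦
          eigenvalues_conjTranspose_mul_self_le_specNorm_sq A i
    _ = A.rank * specNorm A ^ 2 := by
        rw [nsmul_eq_mul, ← rank_conjTranspose_mul_self, hB.rank_eq_card_non_zero_eigs,
          Fintype.card_subtype]

lemma frobNorm_le_sqrt_rank_mul_specNorm : frobNorm A ≤ √(A.rank : ℝ) * specNorm A := by
  rw [← Real.sqrt_sq (specNorm_nonneg A), ← Real.sqrt_mul (Nat.cast_nonneg _),
    Real.le_sqrt (frobNorm_nonneg A) (by positivity)]
  exact frobNorm_sq_le_rank_mul_specNorm_sq A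

lemma frobNorm_le_sqrt_two_mul_specNorm_of_rank_le_two (hA : A.rank ≤ 2) :
    frobNorm A ≤ √2 * specNorm A :=
  (frobNorm_le_sqrt_rank_mul_specNorm A).trans <|
    mul_le_mul_of_nonneg_right (Real.sqrt_le_sqrt (by exact_mod_cast hA)) (specNorm_nonneg A)

section Frobenius

open scoped Matrix.Norms.Frobenius

lemma frobNorm_eq_frobenius_norm : frobNorm A = ‖A‖ := by
  simp [frobNorm, frobenius_norm_def, Real.sqrt_eq_rpow]

lemma norm_toEuclideanLin_le_frobNorm_mul (v : EuclideanSpace ℝ (Fin p)) :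
    ‖toEuclideanLin A v‖ ≤ frobNorm A * ‖v‖ := by
  rw [frobNorm_eq_frobenius_norm]
  calc ‖toEuclideanLin A v‖ = ‖replicateCol (Fin 1) (A *ᵥ v.ofLp)‖ :=
        (frobenius_norm_replicateCol _).symm
    _ = ‖A * replicateCol (Fin 1) v.ofLp‖ := by rw [replicateCol_mulVec]
    _ ≤ ‖A‖ * ‖replicateCol (Fin 1) v.ofLp‖ := frobenius_norm_mul _ _
    _ = ‖A‖ * ‖v‖ := congrArg (‖A‖ * ·) (frobenius_norm_replicateCol _)

end Frobenius

lemma specNorm_le_frobNorm : specNorm A ≤ frobNorm A :=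
  ContinuousLinearMap.opNorm_le_bound _ (frobNorm_nonneg A)
    (norm_toEuclideanLin_le_frobNorm_mul A)

end MatrixNorms

lemma sInf_le_sInf_of_forall_le {α : Type*} {P : α → Prop} {f g : α → ℝ}
    (hf : ∀ x, 0 ≤ f x) (hfg : ∀ x, f x ≤ g x) :
    sInf {t | ∃ x, P x ∧ t = f x} ≤ sInf {t | ∃ x, P x ∧ t = g x} := by
  by_cases hP : ∃ x, P x
  · obtain ⟨x₀, hx₀⟩ := hP
    refine le_csInf ⟨g x₀, x₀, hx₀, rfl⟩ ?_
    rintro _ ⟨x, hx, rfl⟩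
    have hbdd : BddBelow {t | ∃ x, P x ∧ t = f x} := ⟨0, by rintro _ ⟨y, -, rfl⟩; exact hf y⟩
    exact (csInf_le hbdd ⟨x, hx, rfl⟩).trans (hfg x)
  · push Not at hP
    simp [hP]

lemma inv_le_inv_of_le_of_le_mul {a b c : ℝ} (ha : 0 ≤ a) (hab : a ≤ b) (hbc : b ≤ c * a) :
    b⁻¹ ≤ a⁻¹ := by
  rcases ha.eq_or_lt with rfl | ha
  · simp [le_antisymm (by simpa using hbc) hab]
  · exact inv_anti₀ ha hab

lemma inv_mul_inv_le_inv_of_le_mul {a b c : ℝ} (ha : 0 ≤ a) (hab : a ≤ b) (hbc : b ≤ c * a) :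
    c⁻¹ * a⁻¹ ≤ b⁻¹ := by
  rcases ha.eq_or_lt with rfl | ha
  · simpa using hab
  · rw [← mul_inv]
    exact inv_anti₀ (ha.trans_le hab) hbc

lemma inv_sInf_le_and_le_of_attained {α : Type*} {P : α → Prop} {f g : α → ℝ} {c : ℝ}
    (hf : ∀ x, 0 ≤ f x) (hfg : ∀ x, f x ≤ g x) {x₀ : α} (hx₀ : P x₀)
    (hmin : f x₀ = sInf {t | ∃ x, P x ∧ t = f x}) (hgf : g x₀ ≤ c * f x₀) :
    c⁻¹ * (sInf {t | ∃ x, P x ∧ t = f x})⁻¹ ≤ (sInf {t | ∃ x, P x ∧ t = g x})⁻¹ ∧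
      (sInf {t | ∃ x, P x ∧ t = g x})⁻¹ ≤ (sInf {t | ∃ x, P x ∧ t = f x})⁻¹ := by
  have hle := sInf_le_sInf_of_forall_le (P := P) hf hfg
  have hle_mul : sInf {t | ∃ x, P x ∧ t = g x} ≤ c * sInf {t | ∃ x, P x ∧ t = f x} := by
    rw [← hmin]
    have hbdd : BddBelow {t | ∃ x, P x ∧ t = g x} :=
      ⟨0, by rintro _ ⟨x, -, rfl⟩; exact (hf x).trans (hfg x)⟩
    exact (csInf_le hbdd ⟨x₀, hx₀, rfl⟩).trans hgf
  have hf_nonneg : 0 ≤ sInf {t | ∃ x, P x ∧ t = f x} := hmin ▸ hf x₀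
  exact ⟨inv_mul_inv_le_inv_of_le_mul hf_nonneg hle hle_mul,
    inv_le_inv_of_le_of_le_mul hf_nonneg hle hle_mul⟩

theorem mu_frobenius_between_mu_spectral
    {p m : ℕ} (M : Matrix (Fin p) (Fin m) ℂ)
    (hattained : ∃ Δhat : Matrix (Fin m) (Fin p) ℝ,
      ((1 : Matrix (Fin m) (Fin m) ℂ) - Δhat.map (Complex.ofReal) * M).det = 0 ∧
      specNorm Δhat = sInf {t : ℝ | ∃ Δ : Matrix (Fin m) (Fin p) ℝ,
          ((1 : Matrix (Fin m) (Fin m) ℂ) - Δ.map (Complex.ofReal) * M).det = 0 ∧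
          t = specNorm Δ} ∧
      Δhat.rank ≤ 2) :
    (1 / Real.sqrt 2) *
        (sInf {t : ℝ | ∃ Δ : Matrix (Fin m) (Fin p) ℝ,
          ((1 : Matrix (Fin m) (Fin m) ℂ) - Δ.map (Complex.ofReal) * M).det = 0 ∧
          t = specNorm Δ})⁻¹
      ≤ (sInf {t : ℝ | ∃ Δ : Matrix (Fin m) (Fin p) ℝ,
          ((1 : Matrix (Fin m) (Fin m) ℂ) - Δ.map (Complex.ofReal) * M).det = 0 ∧
          t = frobNorm Δ})⁻¹ ∧
    (sInf {t : ℝ | ∃ Δ : Matrix (Fin m) (Fin p) ℝ,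
          ((1 : Matrix (Fin m) (Fin m) ℂ) - Δ.map (Complex.ofReal) * M).det = 0 ∧
          t = frobNorm Δ})⁻¹
      ≤ (sInf {t : ℝ | ∃ Δ : Matrix (Fin m) (Fin p) ℝ,
          ((1 : Matrix (Fin m) (Fin m) ℂ) - Δ.map (Complex.ofReal) * M).det = 0 ∧
          t = specNorm Δ})⁻¹ := by
  obtain ⟨Δhat, hdet, hspec, hrank⟩ := hattained
  rw [one_div]
  exact inv_sInf_le_and_le_of_attained specNorm_nonneg specNorm_le_frobNorm hdet hspec
    (frobNorm_le_sqrt_two_mul_specNorm_of_rank_le_two Δhat hrank)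
end

section
/- Let J, R, Q ∈ ℂ^{n×n} with J skew-Hermitian, R Hermitian positive semidefinite, Q Hermitian positive definite, B ∈ ℂ^{n×r}, w ∈ ℝ, and x ∈ ℂ^n satisfying (I − BB†)(iwI − (J−R)Q)x = 0. Then Re((B*Qx)* B†(iwI − (J−R)Q)x) = x*QRQx ≥ 0. -/
/-!
With `A = iwI - (J - R)Q`, the hypothesis says `BB†Ax = Ax`, so, `Q` being Hermitian,
`(B*Qx)* B†Ax = x*QBB†Ax = x*QAx`. Now `QA = (iwQ - QJQ) + QRQ`, where `iwQ - QJQ` is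
skew-Hermitian and hence has a purely imaginary quadratic form, while `QRQ = Q*RQ` is positive
semidefinite.
-/

open Matrix
open scoped ComplexOrder

namespace Matrix

theorem star_mulVec_dotProduct {m n α : Type*} [Fintype m] [Fintype n] [NonUnitalSemiring α]
    [StarRing α] (A : Matrix m n α) (x : n → α) (v : m → α) :
    star (A *ᵥ x) ⬝ᵥ v = star x ⬝ᵥ (Aᴴ *ᵥ v) := by
  rw [star_mulVec, dotProduct_mulVec]

section RCLike

variable {n 𝕜 : Type*} [Fintype n] [RCLike 𝕜]

theorem re_star_dotProduct_mulVec_self_of_conjTranspose_eq_neg {K : Matrix n n 𝕜}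
    (hK : Kᴴ = -K) (x : n → 𝕜) : RCLike.re (star x ⬝ᵥ (K *ᵥ x)) = 0 := by
  have hconj : star (star x ⬝ᵥ (K *ᵥ x)) = -(star x ⬝ᵥ (K *ᵥ x)) := by
    rw [← star_dotProduct_star, star_star, star_mulVec_dotProduct, hK, neg_mulVec,
      dotProduct_neg]
  have hre := congrArg RCLike.re hconj
  rw [RCLike.star_def, RCLike.conj_re, map_neg] at hre
  linarith

theorem re_star_dotProduct_add_mulVec_self_of_conjTranspose_eq_neg {K : Matrix n n 𝕜}
    (hK : Kᴴ = -K) (M : Matrix n n 𝕜) (x : n → 𝕜) :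
    RCLike.re (star x ⬝ᵥ ((K + M) *ᵥ x)) = RCLike.re (star x ⬝ᵥ (M *ᵥ x)) := by
  rw [add_mulVec, dotProduct_add, map_add,
    re_star_dotProduct_mulVec_self_of_conjTranspose_eq_neg hK, zero_add]

end RCLike

end Matrix

theorem re_inner_eq_xQRQx_nonneg_general
    {n r : ℕ} (J R Q : Matrix (Fin n) (Fin n) ℂ)
    (hJ : Jᴴ = -J) (hR : R.PosSemidef) (hQ : Q.PosDef)
    (B : Matrix (Fin n) (Fin r) ℂ) (Bd : Matrix (Fin r) (Fin n) ℂ)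
    (w : ℝ) (x : Fin n → ℂ)
    (hx : ((1 - B * Bd) * ((Complex.I * w) • (1 : Matrix (Fin n) (Fin n) ℂ)
        - (J - R) * Q)) *ᵥ x = 0) :
    ((star ((Bᴴ * Q) *ᵥ x)) ⬝ᵥ
        ((Bd * ((Complex.I * w) • (1 : Matrix (Fin n) (Fin n) ℂ) - (J - R) * Q)) *ᵥ x)).re
      = ((star x) ⬝ᵥ ((Q * R * Q) *ᵥ x)).re ∧
    0 ≤ ((star x) ⬝ᵥ ((Q * R * Q) *ᵥ x)).re := by
  set A := (Complex.I * w) • (1 : Matrix (Fin n) (Fin n) ℂ) - (J - R) * Q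
  set K := (Complex.I * w) • Q - Q * J * Q
  have hQ' : Qᴴ = Q := hQ.isHermitian
  have hBBd : (B * Bd * A) *ᵥ x = A *ᵥ x := by
    rwa [Matrix.sub_mul, Matrix.one_mul, sub_mulVec, sub_eq_zero, eq_comm] at hx
  have hlhs : star ((Bᴴ * Q) *ᵥ x) ⬝ᵥ ((Bd * A) *ᵥ x) = star x ⬝ᵥ ((Q * A) *ᵥ x) := by
    rw [star_mulVec_dotProduct, conjTranspose_mul, hQ', conjTranspose_conjTranspose]
    simp only [← mulVec_mulVec] at hBBd ⊢
    rw [hBBd]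
  have hQA : Q * A = K + Q * R * Q := by
    simp only [A, K, Matrix.mul_sub, Matrix.sub_mul, Matrix.mul_smul, Matrix.mul_one,
      Matrix.mul_assoc]
    abel
  have hK : Kᴴ = -K := by
    simp only [K, conjTranspose_sub, conjTranspose_smul, conjTranspose_mul, hQ', hJ,
      Matrix.mul_assoc, star_mul', Complex.star_def, Complex.conj_I, Complex.conj_ofReal,
      neg_mul, neg_smul, Matrix.mul_neg]
    abel
  refine ⟨?_, ?_⟩
  · rw [hlhs, hQA]
    exact re_star_dotProduct_add_mulVec_self_of_conjTranspose_eq_neg hK _ x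
  · simpa [hQ'] using (Complex.nonneg_iff.mp
      ((hR.conjTranspose_mul_mul_same Q).dotProduct_mulVec_nonneg x)).1

theorem re_inner_eq_xQRQx_nonneg
    {n r : ℕ} (J R Q : Matrix (Fin n) (Fin n) ℂ)
    (hJ : Jᴴ = -J) (hR : R.PosSemidef) (hQ : Q.PosDef)
    (B : Matrix (Fin n) (Fin r) ℂ) (Bd : Matrix (Fin r) (Fin n) ℂ)
    (hBd : IsMoorePenroseInv B Bd)
    (w : ℝ) (x : Fin n → ℂ)
    (hx : ((1 - B * Bd) * ((Complex.I * w) • (1 : Matrix (Fin n) (Fin n) ℂ)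
        - (J - R) * Q)) *ᵥ x = 0) :
    ((star ((Bᴴ * Q) *ᵥ x)) ⬝ᵥ
        ((Bd * ((Complex.I * w) • (1 : Matrix (Fin n) (Fin n) ℂ) - (J - R) * Q)) *ᵥ x)).re
      = ((star x) ⬝ᵥ ((Q * R * Q) *ᵥ x)).re ∧
    0 ≤ ((star x) ⬝ᵥ ((Q * R * Q) *ᵥ x)).re :=
  re_inner_eq_xQRQx_nonneg_general J R Q hJ hR hQ B Bd w x hx
end
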